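/- arXiv:2402.14452 — 2 statements merged into one kernel-verified Lean document; each statement's English description precedes it below -/
import Mathlib

section
/- Let X be a nonempty set, p a partial metric on X, and {x_n} a sequence in X with r ≥ 0. If {y_n} is a sequence of points each belonging to st-LIM^r x_n, and {y_n} converges to y in the partial metric sense (i.e., lim_{n→∞} p(y_n,y) = p(y,y)), then y also belongs to st-LIM^r x_n. -/
/-- A partial metric on a set `X`. -/
structure IsPartialMetric {X : Type*} (p : X → X → ℝ) : Prop where
  nonneg : ∀ x y : X, 0 ≤ p x y
  self_le : ∀ x y : X, p x x ≤ p x y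
  eq_iff : ∀ x y : X, x = y ↔ p x x = p x y ∧ p x y = p y y
  symm : ∀ x y : X, p x y = p y x
  triangle : ∀ x y z : X, p x y ≤ p x z + p z y - p z z

open Classical in
/-- `A ⊆ ℕ` has natural density `d`. -/
def HasNatDensity (A : Set ℕ) (d : ℝ) : Prop :=
  Filter.Tendsto
    (fun n : ℕ => (((Finset.range n).filter (fun k => k ∈ A)).card : ℝ) / (n : ℝ))
    Filter.atTop (nhds d)

/-- `l` is a rough statistical limit point of the sequence `x` with roughness degree `r`,
i.e. `l ∈ st-LIM^r x_n`. -/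
def RStatLimit {X : Type*} (p : X → X → ℝ) (x : ℕ → X) (r : ℝ) (l : X) : Prop :=
  ∀ ε : ℝ, 0 < ε → HasNatDensity {n : ℕ | r + ε ≤ |p (x n) l - p l l|} 0

/-! Choose `m` with `p (y m) l - p l l < ε / 2`. By the partial-metric triangle inequality
through `y m`, every `n` with `r + ε ≤ |p (x n) l - p l l|` also satisfies
`r + ε / 2 ≤ |p (x n) (y m) - p (y m) (y m)|`, and those `n` form a set of density zero. -/

open Classical in
theorem HasNatDensity.mono_zero {A B : Set ℕ} (hAB : A ⊆ B) (hB : HasNatDensity B 0) :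
    HasNatDensity A 0 := by
  refine squeeze_zero (fun n => by positivity) (fun n => ?_) hB
  gcongr

namespace IsPartialMetric

variable {X : Type*} {p : X → X → ℝ}

theorem self_le_right (hp : IsPartialMetric p) (x y : X) : p y y ≤ p x y :=
  hp.symm y x ▸ hp.self_le y x

theorem abs_sub_self (hp : IsPartialMetric p) (x y : X) : |p x y - p y y| = p x y - p y y :=
  abs_of_nonneg (sub_nonneg.2 (hp.self_le_right x y))

theorem sub_self_le_add (hp : IsPartialMetric p) (x y z : X) :
    p x y - p y y ≤ (p x z - p z z) + (p z y - p y y) := by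
  linarith [hp.triangle x y z]

theorem setOf_le_sub_self_subset (hp : IsPartialMetric p) (x : ℕ → X) {r ε δ : ℝ} {z l : X}
    (hzl : p z l - p l l ≤ δ) :
    {n | r + (ε + δ) ≤ |p (x n) l - p l l|} ⊆ {n | r + ε ≤ |p (x n) z - p z z|} := by
  intro n hn
  simp only [Set.mem_ofPred_eq, hp.abs_sub_self] at hn ⊢
  linarith [hp.sub_self_le_add (x n) l z]

end IsPartialMetric

theorem rStatLimit_mem_of_tendsto_general
    {X : Type*} (p : X → X → ℝ) (hp : IsPartialMetric p)
    (x : ℕ → X) (r : ℝ)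
    (y : ℕ → X) (hy : ∀ n : ℕ, RStatLimit p x r (y n))
    (l : X) (hconv : Filter.Tendsto (fun n : ℕ => p (y n) l) Filter.atTop (nhds (p l l))) :
    RStatLimit p x r l := by
  intro ε hε
  have hε2 : 0 < ε / 2 := half_pos hε
  obtain ⟨m, hm⟩ := (hconv.eventually (eventually_lt_nhds (lt_add_of_pos_right _ hε2))).exists
  have hsub := hp.setOf_le_sub_self_subset x (r := r) (ε := ε / 2) (sub_le_iff_le_add'.2 hm.le)
  rw [add_halves] at hsub
  exact (hy m (ε / 2) hε2).mono_zero hsub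

/-- If a sequence `y_n` of points of `st-LIM^r x_n` converges (in the partial metric
sense) to `y`, then `y ∈ st-LIM^r x_n`. -/
theorem rStatLimit_mem_of_tendsto
    {X : Type*} [Nonempty X] (p : X → X → ℝ) (hp : IsPartialMetric p)
    (x : ℕ → X) (r : ℝ) (hr : 0 ≤ r)
    (y : ℕ → X) (hy : ∀ n : ℕ, RStatLimit p x r (y n))
    (l : X) (hconv : Filter.Tendsto (fun n : ℕ => p (y n) l) Filter.atTop (nhds (p l l))) :
    RStatLimit p x r l :=
  rStatLimit_mem_of_tendsto_general p hp x r y hy l hconv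
end

section
/- Let X be a nonempty set, p a partial metric on X, and {x_n}, {y_n} two sequences in X such that p(x_n, y_n) → 0 as n → ∞. If {x_n} is rough statistically convergent to x with roughness degree r ≥ 0 and there is a positive number c such that p(x_n, x_n) ≤ c for all n, then {y_n} is rough statistically convergent to x with roughness degree r + c. -/
open Filter Topology

open Classical in
theorem HasNatDensity.zero_of_eventually_imp {A B : Set ℕ} (hB : HasNatDensity B 0)
    (hAB : ∀ᶠ n in atTop, n ∈ A → n ∈ B) : HasNatDensity A 0 := by
  obtain ⟨N, hN⟩ := eventually_atTop.mp hAB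
  have hcard : ∀ n : ℕ, (((Finset.range n).filter (· ∈ A)).card : ℝ)
      ≤ ((Finset.range n).filter (· ∈ B)).card + N := by
    intro n
    have hsub : (Finset.range n).filter (· ∈ A) ⊆ (Finset.range n).filter (· ∈ B) ∪ .range N := by
      intro k hk
      rw [Finset.mem_filter] at hk
      rw [Finset.mem_union, Finset.mem_filter]
      by_cases hkN : N ≤ k
      · exact .inl ⟨hk.1, hN k hkN hk.2⟩
      · exact .inr (Finset.mem_range.mpr (not_le.mp hkN))
    exact_mod_cast (Finset.card_le_card hsub).trans
      ((Finset.card_union_le _ _).trans_eq (by rw [Finset.card_range]))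
  have hupper : Tendsto (fun n : ℕ => ((((Finset.range n).filter (· ∈ B)).card : ℝ) + N) / n)
      atTop (𝓝 0) := by
    simpa only [add_div, add_zero] using hB.add (tendsto_const_div_atTop_nhds_zero_nat (N : ℝ))
  refine tendsto_of_tendsto_of_tendsto_of_le_of_le tendsto_const_nhds hupper
    (fun n => by positivity) (fun n => ?_)
  exact div_le_div_of_nonneg_right (hcard n) n.cast_nonneg

theorem IsPartialMetric.abs_sub_le {X : Type*} {p : X → X → ℝ} (hp : IsPartialMetric p)
    (x y z : X) : |p x z - p y z| ≤ p x y := by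
  have hxz := hp.triangle x z y
  have hyz := hp.triangle y z x
  have hxx := hp.nonneg x x
  have hyy := hp.nonneg y y
  rw [hp.symm y x] at hyz
  rw [abs_le]
  constructor <;> linarith

section RStatLimit

variable {X : Type*} {p : X → X → ℝ} {x y : ℕ → X} {r : ℝ} {l : X}

theorem RStatLimit.mono {s : ℝ} (h : RStatLimit p x r l) (hrs : r ≤ s) : RStatLimit p x s l :=
  fun ε hε => (h ε hε).zero_of_eventually_imp
    (Eventually.of_forall fun _ hn => (add_le_add_left hrs ε).trans hn)

theorem RStatLimit.of_tendsto_zero (hp : IsPartialMetric p) (hx : RStatLimit p x r l)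
    (hxy : Tendsto (fun n => p (x n) (y n)) atTop (𝓝 0)) : RStatLimit p y r l := by
  intro ε hε
  refine (hx (ε / 2) (half_pos hε)).zero_of_eventually_imp ?_
  filter_upwards [hxy.eventually (gt_mem_nhds (half_pos hε))] with n hclose hy
  have hshift : |p (y n) l - p l l| ≤ |p (y n) l - p (x n) l| + |p (x n) l - p l l| :=
    abs_sub_le _ _ _
  have hxy_le := hp.abs_sub_le (x n) (y n) l
  rw [abs_sub_comm] at hxy_le
  show r + ε / 2 ≤ |p (x n) l - p l l|
  linarith [(hy : r + ε ≤ |p (y n) l - p l l|)]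

end RStatLimit

theorem rStatLimit_transfer_add_general
    {X : Type*} (p : X → X → ℝ) (hp : IsPartialMetric p)
    (x y : ℕ → X)
    (hxy : Filter.Tendsto (fun n : ℕ => p (x n) (y n)) Filter.atTop (nhds 0))
    (l : X) (r : ℝ) (hx : RStatLimit p x r l)
    (c : ℝ) (hc : 0 < c) :
    RStatLimit p y (r + c) l :=
  (hx.of_tendsto_zero hp hxy).mono (le_add_of_nonneg_right hc.le)

/-- If `p (x_n, y_n) → 0`, `x_n` is `r`-statistically convergent to `x`, and the
self-distances satisfy `p (x_n, x_n) ≤ c` for all `n` with `c > 0`, then `y_n` is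
`(r + c)`-statistically convergent to `x`. -/
theorem rStatLimit_transfer_add
    {X : Type*} [Nonempty X] (p : X → X → ℝ) (hp : IsPartialMetric p)
    (x y : ℕ → X)
    (hxy : Filter.Tendsto (fun n : ℕ => p (x n) (y n)) Filter.atTop (nhds 0))
    (l : X) (r : ℝ) (hr : 0 ≤ r) (hx : RStatLimit p x r l)
    (c : ℝ) (hc : 0 < c) (hselfx : ∀ n : ℕ, p (x n) (x n) ≤ c) :
    RStatLimit p y (r + c) l :=
  rStatLimit_transfer_add_general p hp x y hxy l r hx c hc
end
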